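/- arXiv:2204.04398 — 2 statements merged into one kernel-verified Lean document; each statement's English description precedes it below -/
import Mathlib

section
/- Let R be a two-sided Noetherian ring and M a finitely generated R-module. Then M is reflexive (the canonical map σ_M : M → M** is an isomorphism) if and only if Ext^1_{R^op}(Tr M, R) = 0 and Ext^2_{R^op}(Tr M, R) = 0, where Tr M is the Auslander transpose of M. -/
open CategoryTheory IsLocalRing

universe u

noncomputable section

variable (R : Type u) [CommRing R]

/-- `Ext^i_R(M, N)` is trivial. -/
def extVanish (M N : ModuleCat.{u} R) (i : ℕ) : Prop :=
  Subsingleton (((Ext R (ModuleCat.{u} R) i).obj (Opposite.op M)).obj N)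

/-- The `I`-torsion submodule `Γ_I(M) = {x | I^n x = 0 for some n}`. -/
def torsionGamma (I : Ideal R) (M : Type u) [AddCommGroup M] [Module R M] : Submodule R M :=
  ⨆ n : ℕ, Submodule.torsionBySet R M ((I ^ n : Ideal R) : Set R)

/-- The `i`-th local cohomology of `M` with support in the maximal ideal vanishes. -/
def lcVanish [IsLocalRing R] (M : ModuleCat.{u} R) (i : ℕ) : Prop :=
  Subsingleton ((localCohomology (maximalIdeal R) i).obj M)

/-- `M` is maximal Cohen–Macaulay: `H^i_m(M) = 0` for all `i < dim R`. -/
def IsMCM [IsLocalRing R] (M : ModuleCat.{u} R) : Prop :=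
  ∀ i : ℕ, (i : WithBot (WithTop ℕ)) < ringKrullDim R → lcVanish R M i

/-- `R` is a Cohen–Macaulay local ring. -/
def IsCMLocalRing [IsLocalRing R] : Prop :=
  IsNoetherianRing R ∧ IsMCM R (ModuleCat.of R R)

/-- `K` is a (first) syzygy of `M`. -/
def IsSyzygyOf (K M : ModuleCat.{u} R) : Prop :=
  ∃ (P : ModuleCat.{u} R) (f : P →ₗ[R] M), Module.Projective R P ∧ Module.Finite R P ∧
    Function.Surjective f ∧ Nonempty (K ≃ₗ[R] LinearMap.ker f)

/-- `K` is an `n`-th syzygy of `M`. -/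
def IsNthSyzygyOf : ℕ → ModuleCat.{u} R → ModuleCat.{u} R → Prop
  | 0, K, M => Nonempty (K ≃ₗ[R] M)
  | n + 1, K, M => ∃ N : ModuleCat.{u} R, IsSyzygyOf R N M ∧ IsNthSyzygyOf n K N

/-- `T` is an (Auslander) transpose of `M`. -/
def IsTransposeOf (T M : ModuleCat.{u} R) : Prop :=
  ∃ (P₁ P₀ : ModuleCat.{u} R) (d₁ : P₁ →ₗ[R] P₀) (d₀ : P₀ →ₗ[R] M),
    Module.Projective R P₁ ∧ Module.Finite R P₁ ∧ Module.Projective R P₀ ∧ Module.Finite R P₀ ∧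
    Function.Surjective d₀ ∧ LinearMap.range d₁ = LinearMap.ker d₀ ∧
    Nonempty (T ≃ₗ[R] (Module.Dual R P₁ ⧸ LinearMap.range d₁.dualMap))

/-- Two modules are stably isomorphic. -/
def StablyIso (M N : Type u) [AddCommGroup M] [Module R M] [AddCommGroup N] [Module R N] : Prop :=
  ∃ (P Q : ModuleCat.{u} R), Module.Projective R P ∧ Module.Finite R P ∧
    Module.Projective R Q ∧ Module.Finite R Q ∧ Nonempty ((M × P) ≃ₗ[R] (N × Q))

/-- `M` has a resolution of length `n` by finitely generated projective modules. -/
def HasProjResolLength : ℕ → ModuleCat.{u} R → Prop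
  | 0, M => Module.Projective R M ∧ Module.Finite R M
  | n + 1, M => ∃ (P : ModuleCat.{u} R) (f : P →ₗ[R] M), Module.Projective R P ∧
      Module.Finite R P ∧ Function.Surjective f ∧
      HasProjResolLength n (ModuleCat.of R (LinearMap.ker f))

/-- `M` is totally reflexive (Gorenstein projective). -/
def IsTotReflexive (M : ModuleCat.{u} R) : Prop :=
  Function.Bijective (Module.Dual.eval R M) ∧
  (∀ i : ℕ, 0 < i → extVanish R M (ModuleCat.of R R) i) ∧
  (∀ T : ModuleCat.{u} R, IsTransposeOf R T M →
    ∀ i : ℕ, 0 < i → extVanish R T (ModuleCat.of R R) i)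

/-- `M` has a resolution of length `n` by totally reflexive modules. -/
def HasGResolLength : ℕ → ModuleCat.{u} R → Prop
  | 0, M => IsTotReflexive R M
  | n + 1, M => ∃ (X : ModuleCat.{u} R) (f : X →ₗ[R] M), IsTotReflexive R X ∧
      Function.Surjective f ∧ HasGResolLength n (ModuleCat.of R (LinearMap.ker f))

/-- `R` is a Gorenstein local ring. -/
def IsGorensteinLocal [IsLocalRing R] : Prop :=
  IsNoetherianRing R ∧ ∃ d : ℕ, ringKrullDim R = (d : ℕ) ∧
    (∀ i : ℕ, i ≠ d → extVanish R (ModuleCat.of R (ResidueField R)) (ModuleCat.of R R) i) ∧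
    Nonempty ((((Ext R (ModuleCat.{u} R) d).obj
      (Opposite.op (ModuleCat.of R (ResidueField R)))).obj (ModuleCat.of R R)) ≃ₗ[R]
        ResidueField R)

/-- `R` is a regular local ring. -/
def IsRegularLocal [IsLocalRing R] : Prop :=
  IsNoetherianRing R ∧ ∃ s : Finset R, Ideal.span (s : Set R) = maximalIdeal R ∧
    (s.card : WithBot (WithTop ℕ)) = ringKrullDim R

end

/-!
Dualizing a presentation `P₁ → P₀ → M → 0` by finitely generated projectives gives an exact
sequence `0 → M* → P₀* → P₁* → Tr M → 0`, whose last three terms start a projective resolution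
of `Tr M`. Computed with it, `Ext¹(Tr M, R) = 0` says that every functional on `P₀**` vanishing
on `M* = ker d₁*` comes from `P₁**`, and `Ext²(Tr M, R) = 0` says that every functional on
`M* ⊆ P₀*` extends to `P₀*`. Under `Pᵢ = Pᵢ**` the first condition becomes injectivity of
`M → M**` and the second its surjectivity.
-/

noncomputable section

open Module LinearMap Function

namespace CategoryTheory.ProjectiveResolution

variable {C : Type*} [Category C] [Abelian C] [EnoughProjectives C] {X₀ X₁ : C} (f : X₁ ⟶ X₀)

-- `presentationComplex f` is `X₀ ← X₁ ← ⋯`, continued by syzygies; `presentationDiff f n` is its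
-- differential `X (n + 1) ⟶ X n`, packed with its target and source.
def presentationDiff : ℕ → Σ (A B : C), B ⟶ A
  | 0 => ⟨X₀, X₁, f⟩
  | n + 1 => ⟨(presentationDiff n).2.1, Projective.syzygies (presentationDiff n).2.2,
      Projective.d (presentationDiff n).2.2⟩

lemma projective_d_comp {X Y : C} (g : X ⟶ Y) : Projective.d g ≫ g = 0 :=
  (Category.assoc _ _ _).trans
    ((congrArg (Projective.π (Limits.kernel g) ≫ ·) (Limits.kernel.condition g)).trans
      Limits.comp_zero)

def presentationComplex : ChainComplex C ℕ :=
  ChainComplex.of (fun n => (presentationDiff f n).1) (fun n => (presentationDiff f n).2.2)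
    (fun n => projective_d_comp (presentationDiff f n).2.2)

lemma presentationComplex_d (n : ℕ) :
    (presentationComplex f).d (n + 1) n = (presentationDiff f n).2.2 :=
  ChainComplex.of_d (fun n => (presentationDiff f n).1) (fun n => (presentationDiff f n).2.2) n

lemma presentationComplex_exactAt_succ (n : ℕ) : (presentationComplex f).ExactAt (n + 1) := by
  rw [HomologicalComplex.exactAt_iff' _ (n + 2) (n + 1) n (by simp) (by simp)]
  refine (ShortComplex.exact_iff_of_iso ?_).2 (exact_d_f (presentationDiff f n).2.2)
  refine ShortComplex.isoMk (Iso.refl _) (Iso.refl _) (Iso.refl _) ?_ ?_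
  · simp only [Iso.refl_hom, HomologicalComplex.shortComplexFunctor'_obj_f, presentationComplex_d]
    exact (Category.id_comp _).trans (Category.comp_id _).symm
  · simp only [Iso.refl_hom, HomologicalComplex.shortComplexFunctor'_obj_g, presentationComplex_d]
    exact (Category.id_comp _).trans (Category.comp_id _).symm

instance [Projective X₀] [Projective X₁] (n : ℕ) : Projective ((presentationComplex f).X n) := by
  obtain (_ | _ | n) := n
  · assumption
  · assumption
  · exact inferInstanceAs (Projective (Projective.syzygies _))

def ofPresentation [Projective X₀] [Projective X₁] {Z : C} (p : X₀ ⟶ Z) (w : f ≫ p = 0)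
    (hexact : (ShortComplex.mk f p w).Exact) [Epi p] : ProjectiveResolution Z where
  complex := presentationComplex f
  π := (ChainComplex.toSingle₀Equiv _ _).symm ⟨p, by rw [presentationComplex_d]; exact w⟩
  quasiIso := ⟨fun n => by
    cases n with
    | zero =>
      rw [ChainComplex.quasiIsoAt₀_iff, ShortComplex.quasiIso_iff_of_zeros']
      · refine (ShortComplex.exact_and_epi_g_iff_of_iso ?_).2 ⟨hexact, ‹Epi p›⟩
        have hp : ((ChainComplex.toSingle₀Equiv (presentationComplex f) Z).symm
            ⟨p, by rw [presentationComplex_d]; exact w⟩).f 0 = p :=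
          ChainComplex.toSingle₀Equiv_symm_apply_f_zero _ _
        refine ShortComplex.isoMk (Iso.refl _) (Iso.refl _) (Iso.refl _) ?_ ?_
        · simp only [Iso.refl_hom, HomologicalComplex.shortComplexFunctor'_obj_f,
            presentationComplex_d]
          exact (Category.id_comp _).trans (Category.comp_id _).symm
        · simp only [Iso.refl_hom, HomologicalComplex.shortComplexFunctor'_map_τ₂]
          exact (Category.id_comp p).trans (hp.symm.trans (Category.comp_id _).symm)
      all_goals rfl
    | succ n =>
      rw [quasiIsoAt_iff_exactAt']
      · exact presentationComplex_exactAt_succ f n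
      · exact ChainComplex.exactAt_succ_single_obj _ _⟩

end CategoryTheory.ProjectiveResolution

lemma LinearMap.forall_ker_le_exists_comp_eq_iff {R X Y N : Type*} [Ring R] [AddCommGroup X]
    [Module R X] [AddCommGroup Y] [Module R Y] [AddCommGroup N] [Module R N] (d : X →ₗ[R] Y) :
    (∀ g : X →ₗ[R] N, ker d ≤ ker g → ∃ h : Y →ₗ[R] N, h ∘ₗ d = g) ↔
      ∀ φ : range d →ₗ[R] N, ∃ h : Y →ₗ[R] N, h ∘ₗ (range d).subtype = φ := by
  refine ⟨fun H φ => ?_, fun H g hg => ?_⟩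
  · obtain ⟨h, hh⟩ := H (φ ∘ₗ d.rangeRestrict) fun x hx => by
      simp [show d.rangeRestrict x = 0 from Subtype.ext hx]
    refine ⟨h, ?_⟩
    rw [← cancel_right d.surjective_rangeRestrict]
    exact hh
  · obtain ⟨h, hh⟩ := H ((ker d).liftQ g hg ∘ₗ d.quotKerEquivRange.symm)
    refine ⟨h, LinearMap.ext fun x => ?_⟩
    simpa using congr($hh (d.quotKerEquivRange (Submodule.Quotient.mk x)))

section Duality

variable {R M P₀ P₁ : Type*} [CommRing R] [AddCommGroup M] [Module R M]
  [AddCommGroup P₀] [Module R P₀] [AddCommGroup P₁] [Module R P₁]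
  {d₁ : P₁ →ₗ[R] P₀} {d₀ : P₀ →ₗ[R] M}

lemma Module.Dual.eval_comp_dualMap (f : P₀ →ₗ[R] M) (x : P₀) :
    Dual.eval R P₀ x ∘ₗ f.dualMap = Dual.eval R M (f x) := rfl

lemma LinearMap.ker_dualMap_eq_range_dualMap (hd₀ : Surjective d₀) (hexact : range d₁ = ker d₀) :
    ker d₁.dualMap = range d₀.dualMap := by
  rw [ker_dualMap_eq_dualAnnihilator_range, hexact,
    range_dualMap_eq_dualAnnihilator_ker_of_surjective d₀ hd₀]

lemma injective_dual_eval_iff [IsReflexive R P₀] [IsReflexive R P₁] (hd₀ : Surjective d₀)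
    (hexact : range d₁ = ker d₀) :
    Injective (Dual.eval R M) ↔ ∀ g : Dual R (Dual R P₀), ker d₁.dualMap ≤ ker g →
      ∃ h : Dual R (Dual R P₁), h ∘ₗ d₁.dualMap = g := by
  have hker (x : P₀) : ker d₁.dualMap ≤ ker (Dual.eval R P₀ x) ↔ Dual.eval R M (d₀ x) = 0 := by
    rw [ker_dualMap_eq_range_dualMap hd₀ hexact, range_le_ker_iff, Dual.eval_comp_dualMap]
  have hfactor (x : P₀) :
      (∃ h : Dual R (Dual R P₁), h ∘ₗ d₁.dualMap = Dual.eval R P₀ x) ↔ d₀ x = 0 := by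
    rw [(bijective_dual_eval R P₁).2.exists, ← mem_ker, ← hexact]
    simp only [Dual.eval_comp_dualMap, (bijective_dual_eval R P₀).1.eq_iff, mem_range]
  rw [injective_iff_map_eq_zero, (bijective_dual_eval R P₀).2.forall, hd₀.forall]
  simp only [hker, hfactor]

lemma surjective_dual_eval_iff [IsReflexive R P₀] (hd₀ : Surjective d₀) :
    Surjective (Dual.eval R M) ↔ ∀ φ : range d₀.dualMap →ₗ[R] R,
      ∃ h : Dual R (Dual R P₀), h ∘ₗ (range d₀.dualMap).subtype = φ := by
  let e := LinearEquiv.ofInjective d₀.dualMap (dualMap_injective_of_surjective hd₀)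
  have hext (x : P₀) (φ : range d₀.dualMap →ₗ[R] R) :
      Dual.eval R P₀ x ∘ₗ (range d₀.dualMap).subtype = φ ↔
        Dual.eval R M (d₀ x) = e.dualMap φ := by
    rw [← cancel_right e.surjective]
    rfl
  rw [← Surjective.of_comp_iff _ hd₀, e.dualMap.symm.surjective.forall]
  simp only [(bijective_dual_eval R P₀).2.exists, hext, LinearEquiv.apply_symm_apply]
  rfl

end Duality

section Transpose

open ProjectiveResolution

variable {R : Type u} [CommRing R]

lemma ChainComplex.linearYonedaObj_exactAt_succ_iff {C : ChainComplex (ModuleCat.{u} R) ℕ}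
    {n : ℕ} (hC : C.ExactAt (n + 1)) (N : ModuleCat.{u} R) :
    (C.linearYonedaObj R N).ExactAt (n + 1) ↔
      ∀ g : C.X (n + 1) →ₗ[R] N, ker (C.d (n + 1) n).hom ≤ ker g →
        ∃ h : C.X n →ₗ[R] N, h ∘ₗ (C.d (n + 1) n).hom = g := by
  have hrange : range (C.d (n + 2) (n + 1)).hom = ker (C.d (n + 1) n).hom :=
    ((HomologicalComplex.exactAt_iff' C (n + 2) (n + 1) n (by simp) (by simp)).1
      hC).moduleCat_range_eq_ker
  have hcocycle (g : C.X (n + 1) →ₗ[R] N) :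
      C.d (n + 2) (n + 1) ≫ ModuleCat.ofHom g = 0 ↔ ker (C.d (n + 1) n).hom ≤ ker g := by
    rw [← hrange, range_le_ker_iff, ModuleCat.hom_ext_iff]
    rfl
  rw [HomologicalComplex.exactAt_iff' _ n (n + 1) (n + 2) (by simp) (by simp),
    ShortComplex.moduleCat_exact_iff]
  refine ⟨fun H g hg => ?_, fun H g hg => ?_⟩
  · obtain ⟨h, hh⟩ := H (ModuleCat.ofHom g) ((hcocycle g).2 hg)
    exact ⟨h.hom, congrArg ModuleCat.Hom.hom hh⟩
  · obtain ⟨h, hh⟩ := H g.hom ((hcocycle g.hom).1 hg)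
    exact ⟨ModuleCat.ofHom h, ModuleCat.hom_ext hh⟩

lemma CategoryTheory.ProjectiveResolution.extVanish_succ_iff {Z : ModuleCat.{u} R}
    (P : ProjectiveResolution Z) (N : ModuleCat.{u} R) (n : ℕ) :
    extVanish R Z N (n + 1) ↔
      ∀ g : P.complex.X (n + 1) →ₗ[R] N, ker (P.complex.d (n + 1) n).hom ≤ ker g →
        ∃ h : P.complex.X n →ₗ[R] N, h ∘ₗ (P.complex.d (n + 1) n).hom = g := by
  rw [extVanish, ← ModuleCat.isZero_iff_subsingleton, (P.isoExt _ N).isZero_iff,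
    ← HomologicalComplex.exactAt_iff_isZero_homology,
    ChainComplex.linearYonedaObj_exactAt_succ_iff (P.complex_exactAt_succ n)]

lemma extVanish_congr {A B : ModuleCat.{u} R} (e : A ≃ₗ[R] B) (N : ModuleCat.{u} R) (i : ℕ) :
    extVanish R A N i ↔ extVanish R B N i :=
  (((Ext R (ModuleCat.{u} R) i).mapIso e.toModuleIso.op).app N).toLinearEquiv.toEquiv
    |>.subsingleton_congr.symm

section Presentation

variable {M : Type*} [AddCommGroup M] [Module R M]
  {P₀ P₁ : Type u} [AddCommGroup P₀] [Module R P₀] [Module.Projective R P₀] [Module.Finite R P₀]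
  [AddCommGroup P₁] [Module R P₁] [Module.Projective R P₁] [Module.Finite R P₁]

def transposeResolution (d₁ : P₁ →ₗ[R] P₀) :
    ProjectiveResolution (ModuleCat.of R (Dual R P₁ ⧸ range d₁.dualMap)) :=
  haveI : Epi (ModuleCat.ofHom (range d₁.dualMap).mkQ) :=
    (ModuleCat.epi_iff_surjective _).2 (Submodule.mkQ_surjective _)
  ofPresentation (ModuleCat.ofHom d₁.dualMap) (ModuleCat.ofHom (range d₁.dualMap).mkQ)
    (by ext; simp)
    (by rw [ShortComplex.moduleCat_exact_iff_range_eq_ker]; exact (Submodule.ker_mkQ _).symm)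

lemma transposeResolution_d_one_zero (d₁ : P₁ →ₗ[R] P₀) :
    (transposeResolution d₁).complex.d 1 0 = ModuleCat.ofHom d₁.dualMap :=
  presentationComplex_d _ 0

variable {d₁ : P₁ →ₗ[R] P₀} {d₀ : P₀ →ₗ[R] M}

lemma extVanish_one_transpose_iff (hd₀ : Surjective d₀) (hexact : range d₁ = ker d₀) :
    extVanish R (ModuleCat.of R (Dual R P₁ ⧸ range d₁.dualMap)) (ModuleCat.of R R) 1 ↔
      Injective (Dual.eval R M) := by
  rw [(transposeResolution d₁).extVanish_succ_iff, transposeResolution_d_one_zero]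
  exact (injective_dual_eval_iff hd₀ hexact).symm

lemma extVanish_two_transpose_iff (hd₀ : Surjective d₀) (hexact : range d₁ = ker d₀) :
    extVanish R (ModuleCat.of R (Dual R P₁ ⧸ range d₁.dualMap)) (ModuleCat.of R R) 2 ↔
      Surjective (Dual.eval R M) := by
  have hrange : range ((transposeResolution d₁).complex.d 2 1).hom = range d₀.dualMap := by
    refine ((transposeResolution d₁).exact_succ 0).moduleCat_range_eq_ker.trans ?_
    change ker ((transposeResolution d₁).complex.d 1 0).hom = _
    rw [transposeResolution_d_one_zero]
    exact ker_dualMap_eq_range_dualMap hd₀ hexact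
  rw [(transposeResolution d₁).extVanish_succ_iff, forall_ker_le_exists_comp_eq_iff, hrange]
  exact (surjective_dual_eval_iff hd₀).symm

end Presentation

lemma IsTransposeOf.extVanish_one_iff {T M : ModuleCat.{u} R} (hT : IsTransposeOf R T M) :
    extVanish R T (ModuleCat.of R R) 1 ↔ Injective (Dual.eval R M) := by
  obtain ⟨P₁, P₀, d₁, d₀, _, _, _, _, hd₀, hexact, ⟨e⟩⟩ := hT
  exact (extVanish_congr e _ 1).trans (extVanish_one_transpose_iff hd₀ hexact)

lemma IsTransposeOf.extVanish_two_iff {T M : ModuleCat.{u} R} (hT : IsTransposeOf R T M) :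
    extVanish R T (ModuleCat.of R R) 2 ↔ Surjective (Dual.eval R M) := by
  obtain ⟨P₁, P₀, d₁, d₀, _, _, _, _, hd₀, hexact, ⟨e⟩⟩ := hT
  exact (extVanish_congr e _ 2).trans (extVanish_two_transpose_iff hd₀ hexact)

lemma exists_isTransposeOf [IsNoetherianRing R] (M : ModuleCat.{u} R) [Module.Finite R M] :
    ∃ T : ModuleCat.{u} R, IsTransposeOf R T M := by
  obtain ⟨n, d₀, hd₀⟩ := Module.Finite.exists_fin' R M
  obtain ⟨m, g, hg⟩ := Module.Finite.exists_fin' R (ker d₀)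
  refine ⟨ModuleCat.of R _, ModuleCat.of R (Fin m → R), ModuleCat.of R (Fin n → R),
    (ker d₀).subtype ∘ₗ g, d₀,
    inferInstance, inferInstance, inferInstance, inferInstance, hd₀, ?_, ⟨LinearEquiv.refl _ _⟩⟩
  rw [range_comp, range_eq_top.2 hg, Submodule.map_top, Submodule.range_subtype]

end Transpose

end

theorem stmt_9 (R : Type u) [CommRing R] [IsNoetherianRing R]
    (M : ModuleCat.{u} R) [Module.Finite R M] :
    Function.Bijective (Module.Dual.eval R M) ↔
    (∀ T : ModuleCat.{u} R, IsTransposeOf R T M →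
      extVanish R T (ModuleCat.of R R) 1 ∧ extVanish R T (ModuleCat.of R R) 2) := by
  constructor
  · intro h T hT
    exact ⟨hT.extVanish_one_iff.2 h.injective, hT.extVanish_two_iff.2 h.surjective⟩
  · intro H
    obtain ⟨T, hT⟩ := exists_isTransposeOf M
    exact ⟨hT.extVanish_one_iff.1 (H T hT).1, hT.extVanish_two_iff.1 (H T hT).2⟩
end

section
/- Let R be a two-sided Noetherian ring and n ≥ 1. If M is a nonzero finitely generated R-module that is perfect of grade n (i.e., grade_R M = pd_R M = n), then Ext^n_R(M, R) is a perfect R^op-module of grade n, and Ext^n_{R^op}(Ext^n_R(M,R), R) ≅ M. -/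
open CategoryTheory IsLocalRing

universe u

/-!
Take a resolution `0 → X_n → ⋯ → X_0 → M → 0` by finite projective modules. As
`Ext^i(M, R) = 0` for `i < n`, the dual complex `0 → X_0^* → ⋯ → X_n^*` is exact except at
`X_n^*`, so it is a projective resolution of length `n` of
`D = coker(X_{n-1}^* → X_n^*) = Ext^n(M, R)`.
Finite projective modules are reflexive, so dualising once more gives back `X_n → ⋯ → X_0`.
Hence `Ext^i(D, R)` vanishes for `i < n` by exactness of the original resolution, and
`Ext^n(D, R) = coker(X_1 → X_0) = M`.
-/

noncomputable section

namespace LinearMap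

variable {R A B C : Type*} [CommRing R] [AddCommGroup A] [Module R A] [AddCommGroup B]
  [Module R B] [AddCommGroup C] [Module R C]

lemma range_dualMap_dualMap [Module.IsReflexive R A] (f : A →ₗ[R] B) :
    range f.dualMap.dualMap = (range f).map (Module.Dual.eval R B) := by
  rw [← Module.Dual.eval_comp_comp_evalEquiv_eq, range_comp, range_comp_of_range_eq_top _
    (LinearEquiv.range _)]

lemma ker_dualMap_dualMap [Module.IsReflexive R A] [Module.IsReflexive R B] (f : A →ₗ[R] B) :
    ker f.dualMap.dualMap = (ker f).map (Module.Dual.eval R A) := by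
  rw [← Module.Dual.eval_comp_comp_evalEquiv_eq,
    ker_comp_of_ker_eq_bot _ (ker_eq_bot.2 (Module.bijective_dual_eval R B).1), ker_comp,
    Submodule.comap_equiv_eq_map_symm, LinearEquiv.symm_symm]
  rfl

lemma ker_dualMap_dualMap_eq_bot [Module.IsReflexive R A] [Module.IsReflexive R B]
    {f : A →ₗ[R] B} (hf : ker f = ⊥) : ker f.dualMap.dualMap = ⊥ := by
  rw [ker_dualMap_dualMap, hf, Submodule.map_bot]

lemma range_dualMap_dualMap_eq_ker [Module.IsReflexive R A] [Module.IsReflexive R B]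
    [Module.IsReflexive R C] {f : A →ₗ[R] B} {g : B →ₗ[R] C} (h : range f = ker g) :
    range f.dualMap.dualMap = ker g.dualMap.dualMap := by
  rw [range_dualMap_dualMap, ker_dualMap_dualMap, h]

def quotRangeDualMapDualMapEquiv [Module.IsReflexive R A] [Module.IsReflexive R B]
    (f : A →ₗ[R] B) :
    (Module.Dual R (Module.Dual R B) ⧸ range f.dualMap.dualMap) ≃ₗ[R] B ⧸ range f :=
  (Submodule.Quotient.equiv _ _ (Module.evalEquiv R B) (range_dualMap_dualMap f).symm).symm

end LinearMap

variable {R : Type u} [CommRing R]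

namespace CochainComplex

variable (K : CochainComplex (ModuleCat.{u} R) ℕ)

lemma exactAt_iff_range_eq_ker {i j : ℕ} (hj : (ComplexShape.up ℕ).prev i = j) :
    K.ExactAt i ↔ LinearMap.range (K.d j i).hom = LinearMap.ker (K.d i (i + 1)).hom := by
  rw [HomologicalComplex.exactAt_iff' _ j i (i + 1) hj (by simp),
    ShortComplex.moduleCat_exact_iff_range_eq_ker]
  rfl

lemma range_d_eq_ker_of_exactAt {a b c : ℕ} (hab : a + 1 = b) (hbc : b + 1 = c)
    (h : K.ExactAt b) : LinearMap.range (K.d a b).hom = LinearMap.ker (K.d b c).hom := by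
  subst hab hbc
  exact (K.exactAt_iff_range_eq_ker (by simp)).1 h

lemma range_d_of_eq {i j : ℕ} (h : i = j) : LinearMap.range (K.d i j).hom = ⊥ := by
  rw [K.shape i j (by simp [h])]
  simp

lemma ker_d_of_eq {i j : ℕ} (h : i = j) : LinearMap.ker (K.d i j).hom = ⊤ := by
  rw [K.shape i j (by simp [h])]
  simp

lemma exactAt_zero_iff_ker_eq_bot {i j : ℕ} (hi : i = 0) (hj : j = 1) :
    K.ExactAt i ↔ LinearMap.ker (K.d i j).hom = ⊥ := by
  subst hi hj
  rw [K.exactAt_iff_range_eq_ker (j := 0) (by simp), K.range_d_of_eq rfl, eq_comm]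

end CochainComplex

def dualComplex (C : ChainComplex (ModuleCat.{u} R) ℕ) : CochainComplex (ModuleCat.{u} R) ℕ where
  X i := ModuleCat.of R (Module.Dual R (C.X i))
  d i j := ModuleCat.ofHom (C.d j i).hom.dualMap
  shape i j h := by
    rw [C.shape j i (by simpa using h)]
    ext
    simp
  d_comp_d' i j k _ _ := by
    ext φ x
    change φ ((C.d k j ≫ C.d j i) x) = 0
    simp

lemma dualComplex_d (C : ChainComplex (ModuleCat.{u} R) ℕ) (i j : ℕ) :
    (dualComplex C).d i j = ModuleCat.ofHom (C.d j i).hom.dualMap :=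
  rfl

def linearYonedaObjIsoDualComplex (C : ChainComplex (ModuleCat.{u} R) ℕ) :
    C.linearYonedaObj R (ModuleCat.of R R) ≅ dualComplex C :=
  HomologicalComplex.Hom.isoOfComponents (fun _ => ModuleCat.homLinearEquiv.toModuleIso)
    (fun _ _ _ => rfl)

namespace CategoryTheory.ProjectiveResolution

variable {M : ModuleCat.{u} R} (P : ProjectiveResolution M)

def extIsoHomologyDualComplex (i : ℕ) :
    ((Ext R (ModuleCat.{u} R) i).obj (Opposite.op M)).obj (ModuleCat.of R R) ≅
      (dualComplex P.complex).homology i :=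
  P.isoExt i (ModuleCat.of R R) ≪≫
    HomologicalComplex.homologyMapIso (linearYonedaObjIsoDualComplex P.complex) i

lemma extVanish_iff_exactAt (i : ℕ) :
    extVanish R M (ModuleCat.of R R) i ↔ (dualComplex P.complex).ExactAt i := by
  rw [extVanish, HomologicalComplex.exactAt_iff_isZero_homology, ModuleCat.isZero_iff_subsingleton,
    Equiv.subsingleton_congr (P.extIsoHomologyDualComplex i).toLinearEquiv.toEquiv]

def extEquivQuotient {n : ℕ} (hd : (dualComplex P.complex).d n (n + 1) = 0) :
    ((Ext R (ModuleCat.{u} R) n).obj (Opposite.op M)).obj (ModuleCat.of R R) ≃ₗ[R]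
      (dualComplex P.complex).X n ⧸ LinearMap.range ((dualComplex P.complex).d (n - 1) n).hom := by
  set S := (dualComplex P.complex).sc' (n - 1) n (n + 1)
  have hcycles : LinearMap.ker S.g.hom = ⊤ := by
    rw [show S.g = 0 from hd]
    simp
  let e : LinearMap.ker S.g.hom ≃ₗ[R] S.X₂ :=
    (LinearEquiv.ofEq _ _ hcycles).trans Submodule.topEquiv
  refine (P.extIsoHomologyDualComplex n ≪≫
    (dualComplex P.complex).homologyIsoSc' (n - 1) n (n + 1) (by cases n <;> simp) (by simp) ≪≫
    S.moduleCatHomologyIso).toLinearEquiv ≪≫ₗ Submodule.Quotient.equiv _ _ e ?_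
  change Submodule.map (LinearMap.ker S.g.hom).subtype _ = LinearMap.range S.f.hom
  rw [← LinearMap.range_comp]
  rfl

end CategoryTheory.ProjectiveResolution

def extLinearEquivOfIso {M M' : ModuleCat.{u} R} (e : M ≅ M') (i : ℕ) (N : ModuleCat.{u} R) :
    ((Ext R (ModuleCat.{u} R) i).obj (Opposite.op M)).obj N ≃ₗ[R]
      ((Ext R (ModuleCat.{u} R) i).obj (Opposite.op M')).obj N :=
  (((Ext R (ModuleCat.{u} R) i).mapIso e.op.symm).app N).toLinearEquiv

/-- A resolution `⋯ → X 1 → X 0 → M → 0` by finite projective modules with `d n = 0`, so that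
`X n → ⋯ → X 0` is a resolution of length `n`; above degree `n` the complex is only required to
be exact, not zero. -/
structure FinProjResolution (n : ℕ) (M : ModuleCat.{u} R) where
  X : ℕ → ModuleCat.{u} R
  d : ∀ i : ℕ, X (i + 1) ⟶ X i
  π : X 0 ⟶ M
  projective : ∀ i, Module.Projective R (X i)
  finite : ∀ i, Module.Finite R (X i)
  d_length : d n = 0
  surjective_π : Function.Surjective π
  range_d_zero : LinearMap.range (d 0).hom = LinearMap.ker π.hom
  range_d_succ : ∀ i, LinearMap.range (d (i + 1)).hom = LinearMap.ker (d i).hom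

namespace FinProjResolution

attribute [instance] projective finite

/-- For `n = 0` the module is resolved by `⋯ → M → M → M` with differentials alternately `0`
and `𝟙`. -/
lemma nonempty_of_hasProjResolLength :
    ∀ (n : ℕ) (M : ModuleCat.{u} R), HasProjResolLength R n M → Nonempty (FinProjResolution n M)
  | 0, M, ⟨hproj, hfin⟩ => by
    refine ⟨⟨fun _ => M, fun i => if Even i then 0 else 𝟙 M, 𝟙 M,
      fun _ => hproj, fun _ => hfin, by simp, Function.surjective_id, by simp, fun i => ?_⟩⟩
    by_cases hi : Even i <;> simp [hi, Nat.even_add_one]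
  | n + 1, M, ⟨P, f, hP, hPfin, hsurj, hrec⟩ => by
    obtain ⟨Q⟩ := nonempty_of_hasProjResolLength n _ hrec
    refine ⟨⟨fun i => match i with | 0 => P | j + 1 => Q.X j,
      fun i => match i with
        | 0 => ModuleCat.ofHom ((LinearMap.ker f).subtype ∘ₗ Q.π.hom)
        | j + 1 => Q.d j,
      ModuleCat.ofHom f,
      fun i => match i with | 0 => hP | j + 1 => Q.projective j,
      fun i => match i with | 0 => hPfin | j + 1 => Q.finite j,
      Q.d_length, hsurj, ?_, fun i => ?_⟩⟩
    · change LinearMap.range ((LinearMap.ker f).subtype ∘ₗ Q.π.hom) = LinearMap.ker f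
      rw [LinearMap.range_comp, LinearMap.range_eq_top.mpr Q.surjective_π, Submodule.map_top,
        Submodule.range_subtype]
    · match i with
      | 0 =>
        change LinearMap.range (Q.d 0).hom = LinearMap.ker ((LinearMap.ker f).subtype ∘ₗ Q.π.hom)
        rw [LinearMap.ker_comp, Submodule.ker_subtype, Submodule.comap_bot, Q.range_d_zero]
      | j + 1 => exact Q.range_d_succ j

lemma hasProjResolLength :
    ∀ {n : ℕ} {M : ModuleCat.{u} R}, FinProjResolution n M → HasProjResolLength R n M
  | 0, M, F => by
    have hinj : Function.Injective F.π.hom := by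
      rw [← LinearMap.ker_eq_bot, ← F.range_d_zero, F.d_length]
      simp
    let e : F.X 0 ≃ₗ[R] M := LinearEquiv.ofBijective F.π.hom ⟨hinj, F.surjective_π⟩
    exact ⟨Module.Projective.of_equiv e, Module.Finite.equiv e⟩
  | n + 1, M, F => by
    have hd (x : F.X 1) : F.d 0 x ∈ LinearMap.ker F.π.hom := F.range_d_zero ▸ ⟨x, rfl⟩
    refine ⟨F.X 0, F.π.hom, F.projective 0, F.finite 0, F.surjective_π,
      hasProjResolLength ⟨fun i => F.X (i + 1), fun i => F.d (i + 1),
        ModuleCat.ofHom ((F.d 0).hom.codRestrict _ hd), fun i => F.projective (i + 1),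
        fun i => F.finite (i + 1), F.d_length, ?_, ?_, fun i => F.range_d_succ (i + 1)⟩⟩
    · rintro ⟨y, hy⟩
      obtain ⟨x, hx⟩ := LinearMap.mem_range.mp (F.range_d_zero ▸ hy)
      exact ⟨x, Subtype.ext hx⟩
    · change LinearMap.range (F.d 1).hom = LinearMap.ker ((F.d 0).hom.codRestrict _ hd)
      rw [LinearMap.ker_codRestrict]
      exact F.range_d_succ 0

variable {n : ℕ} {M : ModuleCat.{u} R} (F : FinProjResolution n M)

def congr {M' : ModuleCat.{u} R} (e : M ≃ₗ[R] M') : FinProjResolution n M' where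
  __ := F
  π := ModuleCat.ofHom (e.toLinearMap ∘ₗ F.π.hom)
  surjective_π := e.surjective.comp F.surjective_π
  range_d_zero := by
    rw [F.range_d_zero, ModuleCat.hom_ofHom, LinearMap.ker_comp, LinearEquiv.ker,
      Submodule.comap_bot]

lemma d_comp_d (i : ℕ) : F.d (i + 1) ≫ F.d i = 0 := by
  ext x
  have : F.d (i + 1) x ∈ LinearMap.ker (F.d i).hom := F.range_d_succ i ▸ ⟨x, rfl⟩
  exact this

def complex : ChainComplex (ModuleCat.{u} R) ℕ := ChainComplex.of F.X F.d F.d_comp_d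

@[simp] lemma complex_d (i : ℕ) : F.complex.d (i + 1) i = F.d i := ChainComplex.of_d _ _ i

instance (i : ℕ) : Module.Finite R (F.complex.X i) := F.finite i

instance (i : ℕ) : Projective (F.complex.X i) :=
  (IsProjective.iff_projective _).mp (F.projective i)

lemma range_complex_d {a b c : ℕ} (hab : a = b + 1) (hbc : b = c + 1) :
    LinearMap.range (F.complex.d a b).hom = LinearMap.ker (F.complex.d b c).hom := by
  subst hab hbc
  rw [F.complex_d, F.complex_d]
  exact F.range_d_succ c

lemma ker_complex_d_length {a b : ℕ} (ha : a = n) (hab : a = b + 1) :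
    LinearMap.ker (F.complex.d a b).hom = ⊥ := by
  subst hab ha
  rw [F.complex_d]
  change LinearMap.ker (F.d b).hom = ⊥
  rw [← F.range_d_succ, F.d_length]
  simp

lemma d_comp_π : F.complex.d 1 0 ≫ F.π = 0 := by
  rw [F.complex_d 0]
  ext x
  have : F.d 0 x ∈ LinearMap.ker F.π.hom := F.range_d_zero ▸ ⟨x, rfl⟩
  exact this

def quotRangeComplexDEquiv {p q : ℕ} (hp : p = 1) (hq : q = 0) :
    (F.complex.X q ⧸ LinearMap.range (F.complex.d p q).hom) ≃ₗ[R] M := by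
  subst hp hq
  change (F.X 0 ⧸ LinearMap.range (F.complex.d 1 0).hom) ≃ₗ[R] M
  exact (Submodule.quotEquivOfEq _ _ (by rw [F.complex_d]; exact F.range_d_zero)).trans
    (F.π.hom.quotKerEquivOfSurjective F.surjective_π)

def toProjectiveResolution : ProjectiveResolution M where
  complex := F.complex
  π := (F.complex.toSingle₀Equiv M).symm ⟨F.π, F.d_comp_π⟩
  quasiIso := by
    refine ⟨fun i => ?_⟩
    match i with
    | 0 =>
      have hf : ((F.complex.toSingle₀Equiv M).symm ⟨F.π, F.d_comp_π⟩).f 0 = F.π :=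
        ChainComplex.toSingle₀Equiv_symm_apply_f_zero _ _
      rw [ChainComplex.quasiIsoAt₀_iff, ShortComplex.quasiIso_iff_of_zeros']
      rotate_left
      · exact F.complex.shape _ _ (by simp)
      · exact (HomologicalComplex.isZero_single_obj_X (ComplexShape.down ℕ) 0 M 1
          (by simp)).eq_of_src _ _
      · exact ((ChainComplex.single₀ (ModuleCat.{u} R)).obj M).shape _ _ (by simp)
      constructor
      · rw [ShortComplex.moduleCat_exact_iff_range_eq_ker]
        change LinearMap.range (F.complex.d 1 0).hom = LinearMap.ker
          ((((F.complex.toSingle₀Equiv M).symm ⟨F.π, F.d_comp_π⟩)).f 0).hom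
        rw [hf, F.complex_d 0]
        exact F.range_d_zero
      · rw [ModuleCat.epi_iff_surjective]
        change Function.Surjective
          ((((F.complex.toSingle₀Equiv M).symm ⟨F.π, F.d_comp_π⟩)).f 0)
        rw [hf]
        exact F.surjective_π
    | i + 1 =>
      rw [quasiIsoAt_iff_exactAt' _ _ (ChainComplex.exactAt_succ_single_obj M i),
        HomologicalComplex.exactAt_iff' _ (i + 2) (i + 1) i (by simp) (by simp),
        ShortComplex.moduleCat_exact_iff_range_eq_ker]
      exact F.range_complex_d rfl rfl

@[simp] lemma toProjectiveResolution_complex : F.toProjectiveResolution.complex = F.complex :=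
  rfl

def dualCoker : ModuleCat.{u} R :=
  ModuleCat.of R ((dualComplex F.complex).X n ⧸
    LinearMap.range ((dualComplex F.complex).d (n - 1) n).hom)

def extEquivDualCoker :
    ((Ext R (ModuleCat.{u} R) n).obj (Opposite.op M)).obj (ModuleCat.of R R) ≃ₗ[R] F.dualCoker :=
  F.toProjectiveResolution.extEquivQuotient <| by
    rw [toProjectiveResolution_complex, dualComplex_d, complex_d, F.d_length]
    ext φ x
    exact map_zero φ

/-- The differentials of `X_n^* → ⋯ → X_0^*`, read as a chain complex and continued above
degree `n` by `⋯ → X_0^* → X_0^* → X_0^*` with differentials alternately `0` and `𝟙`. -/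
def dualD (j : ℕ) : (dualComplex F.complex).X (n - (j + 1)) ⟶ (dualComplex F.complex).X (n - j) :=
  if h : Even (j - n) then (dualComplex F.complex).d (n - (j + 1)) (n - j)
  else ((dualComplex F.complex).XIsoOfEq <| by
    have : j - n ≠ 0 := fun h0 => h (h0 ▸ Even.zero)
    omega).hom

lemma dualD_of_even {j : ℕ} (h : Even (j - n)) :
    F.dualD j = (dualComplex F.complex).d (n - (j + 1)) (n - j) :=
  dif_pos h

lemma dualD_of_lt {j : ℕ} (h : j < n) :
    F.dualD j = (dualComplex F.complex).d (n - (j + 1)) (n - j) :=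
  F.dualD_of_even (by rw [Nat.sub_eq_zero_of_le h.le]; exact Even.zero)

lemma range_dualD_succ (hexact : ∀ i < n, (dualComplex F.complex).ExactAt i) (j : ℕ) :
    LinearMap.range (F.dualD (j + 1)).hom = LinearMap.ker (F.dualD j).hom := by
  rcases lt_or_ge (j + 1) n with hjn | hjn
  · rw [F.dualD_of_lt hjn, F.dualD_of_lt (by omega)]
    exact (dualComplex F.complex).range_d_eq_ker_of_exactAt (by omega) (by omega)
      (hexact _ (by omega))
  by_cases hev : Even (j + 1 - n)
  · rw [F.dualD_of_even hev, (dualComplex F.complex).range_d_of_eq (by omega)]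
    rcases hjn.eq_or_lt with hj | hj
    · rw [F.dualD_of_lt (by omega)]
      exact (((dualComplex F.complex).exactAt_zero_iff_ker_eq_bot (by omega) (by omega)).1
        (hexact (n - (j + 1)) (by omega))).symm
    · rw [show j + 1 - n = j - n + 1 by omega, Nat.even_add_one] at hev
      rw [dualD, dif_neg hev]
      exact (LinearEquiv.ker (Iso.toLinearEquiv _)).symm
  · rw [dualD, dif_neg hev]
    have hnj : n ≤ j := by
      by_contra h
      exact hev (by rw [show j + 1 - n = 0 by omega]; exact Even.zero)
    rw [show j + 1 - n = j - n + 1 by omega, Nat.even_add_one, not_not] at hev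
    rw [F.dualD_of_even hev, (dualComplex F.complex).ker_d_of_eq (by omega)]
    exact LinearEquiv.range (Iso.toLinearEquiv _)

def dual (hexact : ∀ i < n, (dualComplex F.complex).ExactAt i) :
    FinProjResolution n F.dualCoker where
  X j := (dualComplex F.complex).X (n - j)
  d := F.dualD
  π := ModuleCat.ofHom (Submodule.mkQ _)
  projective j := inferInstanceAs (Module.Projective R (Module.Dual R (F.complex.X (n - j))))
  finite j := inferInstanceAs (Module.Finite R (Module.Dual R (F.complex.X (n - j))))
  d_length := by rw [dualD_of_even _ (by simp), (dualComplex F.complex).shape _ _ (by simp)]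
  surjective_π := Submodule.mkQ_surjective _
  range_d_zero := by
    rw [F.dualD_of_even (by simp)]
    exact (Submodule.ker_mkQ _).symm
  range_d_succ := F.range_dualD_succ hexact

lemma dualComplex_dual_d (hexact : ∀ i < n, (dualComplex F.complex).ExactAt i) {i j : ℕ}
    (hij : i + 1 = j) (hj : j ≤ n) :
    (dualComplex (F.dual hexact).complex).d i j =
      ModuleCat.ofHom (F.complex.d (n - i) (n - j)).hom.dualMap.dualMap := by
  subst hij
  rw [dualComplex_d, complex_d]
  change ModuleCat.ofHom (F.dualD i).hom.dualMap = _
  rw [F.dualD_of_lt (by omega)]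
  rfl

lemma extVanish_dualCoker (hexact : ∀ i < n, (dualComplex F.complex).ExactAt i) {i : ℕ}
    (hi : i < n) : extVanish R F.dualCoker (ModuleCat.of R R) i := by
  rw [(F.dual hexact).toProjectiveResolution.extVanish_iff_exactAt, toProjectiveResolution_complex]
  cases i with
  | zero =>
    rw [CochainComplex.exactAt_zero_iff_ker_eq_bot _ rfl rfl,
      F.dualComplex_dual_d hexact rfl (by omega)]
    exact LinearMap.ker_dualMap_dualMap_eq_bot (F.ker_complex_d_length (by omega) (by omega))
  | succ i =>
    rw [CochainComplex.exactAt_iff_range_eq_ker _ (by simp : (ComplexShape.up ℕ).prev (i + 1) = i),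
      F.dualComplex_dual_d hexact rfl (by omega), F.dualComplex_dual_d hexact rfl (by omega)]
    exact LinearMap.range_dualMap_dualMap_eq_ker (F.range_complex_d (by omega) (by omega))

def extDualCokerEquiv (hexact : ∀ i < n, (dualComplex F.complex).ExactAt i) (hn : 1 ≤ n) :
    ((Ext R (ModuleCat.{u} R) n).obj (Opposite.op F.dualCoker)).obj (ModuleCat.of R R) ≃ₗ[R] M := by
  refine (F.dual hexact).extEquivDualCoker ≪≫ₗ ?_
  change ((dualComplex (F.dual hexact).complex).X n ⧸
    LinearMap.range ((dualComplex (F.dual hexact).complex).d (n - 1) n).hom) ≃ₗ[R] M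
  rw [F.dualComplex_dual_d hexact (by omega) le_rfl]
  exact LinearMap.quotRangeDualMapDualMapEquiv _ ≪≫ₗ
    F.quotRangeComplexDEquiv (by omega) (by omega)

end FinProjResolution

end

theorem stmt_16_general (R : Type u) [CommRing R] (n : ℕ) (hn : 1 ≤ n)
    (M : ModuleCat.{u} R) [Nontrivial M]
    (hgrade : ∀ i : ℕ, i < n → extVanish R M (ModuleCat.of R R) i)
    (hpd : HasProjResolLength R n M) :
    (∀ i : ℕ, i < n →
      extVanish R (((Ext R (ModuleCat.{u} R) n).obj (Opposite.op M)).obj (ModuleCat.of R R))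
        (ModuleCat.of R R) i) ∧
    ¬ extVanish R (((Ext R (ModuleCat.{u} R) n).obj (Opposite.op M)).obj (ModuleCat.of R R))
        (ModuleCat.of R R) n ∧
    HasProjResolLength R n
      (((Ext R (ModuleCat.{u} R) n).obj (Opposite.op M)).obj (ModuleCat.of R R)) ∧
    Nonempty ((((Ext R (ModuleCat.{u} R) n).obj
        (Opposite.op (((Ext R (ModuleCat.{u} R) n).obj (Opposite.op M)).obj
          (ModuleCat.of R R)))).obj (ModuleCat.of R R)) ≃ₗ[R] M) := by
  obtain ⟨F⟩ := FinProjResolution.nonempty_of_hasProjResolLength n M hpd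
  have hexact : ∀ i < n, (dualComplex F.complex).ExactAt i := fun i hi =>
    (F.toProjectiveResolution.extVanish_iff_exactAt i).1 (hgrade i hi)
  let e := F.extEquivDualCoker
  let extCongr (i : ℕ) := extLinearEquivOfIso e.toModuleIso i (ModuleCat.of R R)
  let eM := extCongr n ≪≫ₗ F.extDualCokerEquiv hexact hn
  exact ⟨fun i hi => (extCongr i).toEquiv.subsingleton_congr.2 (F.extVanish_dualCoker hexact hi),
    fun h => not_subsingleton M (eM.toEquiv.subsingleton_congr.1 h),
    ((F.dual hexact).congr e.symm).hasProjResolLength, ⟨eM⟩⟩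

theorem stmt_16 (R : Type u) [CommRing R] [IsNoetherianRing R] (n : ℕ) (hn : 1 ≤ n)
    (M : ModuleCat.{u} R) [Module.Finite R M] [Nontrivial M]
    (hgrade : ∀ i : ℕ, i < n → extVanish R M (ModuleCat.of R R) i)
    (hgrade' : ¬ extVanish R M (ModuleCat.of R R) n)
    (hpd : HasProjResolLength R n M) :
    (∀ i : ℕ, i < n →
      extVanish R (((Ext R (ModuleCat.{u} R) n).obj (Opposite.op M)).obj (ModuleCat.of R R))
        (ModuleCat.of R R) i) ∧
    ¬ extVanish R (((Ext R (ModuleCat.{u} R) n).obj (Opposite.op M)).obj (ModuleCat.of R R))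
        (ModuleCat.of R R) n ∧
    HasProjResolLength R n
      (((Ext R (ModuleCat.{u} R) n).obj (Opposite.op M)).obj (ModuleCat.of R R)) ∧
    Nonempty ((((Ext R (ModuleCat.{u} R) n).obj
        (Opposite.op (((Ext R (ModuleCat.{u} R) n).obj (Opposite.op M)).obj
          (ModuleCat.of R R)))).obj (ModuleCat.of R R)) ≃ₗ[R] M) :=
  stmt_16_general R n hn M hgrade hpd
end
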